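/- arXiv:2109.07759 — 2 statements merged into one kernel-verified Lean document; each statement's English description precedes it below -/
import Mathlib

section
/- Consider the system ξ' = r² ε G(ξ, r, ε), r' = −r, ε' = ε with G smooth and bounded by M on a compact set containing the trajectory. Fix r₀ > 0, ε₀ > 0 and an initial condition (ξ₀, r₀, ε₁) with 0 < ε₁ < ε₀. The solution reaches the section {ε = ε₀} at time T = log(ε₀/ε₁), and the ξ-value there satisfies ξ(T) = ξ₀ + r₀ ε₁ ∫₀^T e^{−s} r₀ G(ξ(s), e^{−s}r₀, e^{s}ε₁) ds; in particular |ξ(T) − ξ₀| ≤ M r₀² ε₁ T = M r₀² ε₁ log(ε₀/ε₁), i.e., the transition map is the identity up to O(ε₁ log ε₁⁻¹) as ε₁ → 0. -/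
open Real

/-- Transition map near the hyperbolic edge in normal form: with `r(s) = e^{-s} r₀`,
`ε(s) = e^s ε₁`, the section `{ε = ε₀}` is reached at `T = log(ε₀/ε₁)`, the `ξ`-component
has the stated integral representation, and the transition map is the identity up to
`O(ε₁ log ε₁⁻¹)`. -/
theorem stmt_10 (G : ℝ × ℝ × ℝ → ℝ) (hG : ContDiff ℝ (⊤ : ℕ∞) G)
    (r₀ ε₀ ε₁ M : ℝ) (hr₀ : 0 < r₀) (hε₁ : 0 < ε₁) (hε₁₀ : ε₁ < ε₀)
    (ξ : ℝ → ℝ)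
    (hξ : ∀ s : ℝ, HasDerivAt ξ
      ((Real.exp (-s) * r₀) ^ 2 * (Real.exp s * ε₁) *
        G (ξ s, Real.exp (-s) * r₀, Real.exp s * ε₁)) s)
    (hM : ∀ s ∈ Set.Icc (0:ℝ) (Real.log (ε₀ / ε₁)),
      |G (ξ s, Real.exp (-s) * r₀, Real.exp s * ε₁)| ≤ M) :
    Real.exp (Real.log (ε₀ / ε₁)) * ε₁ = ε₀ ∧
    ξ (Real.log (ε₀ / ε₁)) = ξ 0 + r₀ * ε₁ *
      ∫ s in (0:ℝ)..Real.log (ε₀ / ε₁),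
        Real.exp (-s) * r₀ * G (ξ s, Real.exp (-s) * r₀, Real.exp s * ε₁) ∧
    |ξ (Real.log (ε₀ / ε₁)) - ξ 0| ≤ M * r₀ ^ 2 * ε₁ * Real.log (ε₀ / ε₁) := by
  set T := Real.log (ε₀ / ε₁) with hTdef
  have hT : 0 < T := Real.log_pos (by rw [lt_div_iff₀ hε₁]; linarith)
  have h1 : Real.exp T * ε₁ = ε₀ := by
    rw [hTdef, Real.exp_log (div_pos (by linarith) hε₁)]
    field_simp
  -- continuity of the derivative
  have hξc : Continuous ξ := by
    refine continuous_iff_continuousAt.mpr fun s => (hξ s).continuousAt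
  have hcont : Continuous (fun s : ℝ =>
      (Real.exp (-s) * r₀) ^ 2 * (Real.exp s * ε₁) *
        G (ξ s, Real.exp (-s) * r₀, Real.exp s * ε₁)) := by
    have hGc : Continuous G := hG.continuous
    fun_prop
  have hftc : ∫ s in (0:ℝ)..T,
      (Real.exp (-s) * r₀) ^ 2 * (Real.exp s * ε₁) *
        G (ξ s, Real.exp (-s) * r₀, Real.exp s * ε₁) = ξ T - ξ 0 :=
    intervalIntegral.integral_eq_sub_of_hasDerivAt (fun s _ => hξ s)
      (hcont.intervalIntegrable _ _)
  have hexp : ∀ s : ℝ, Real.exp (-s) * Real.exp s = 1 := by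
    intro s; rw [← Real.exp_add]; simp
  have hkey : ∀ s : ℝ,
      (Real.exp (-s) * r₀) ^ 2 * (Real.exp s * ε₁) *
        G (ξ s, Real.exp (-s) * r₀, Real.exp s * ε₁)
      = r₀ * ε₁ * (Real.exp (-s) * r₀ * G (ξ s, Real.exp (-s) * r₀, Real.exp s * ε₁)) := by
    intro s
    have h := hexp s
    linear_combination (r₀ ^ 2 * ε₁ * Real.exp (-s) *
      G (ξ s, Real.exp (-s) * r₀, Real.exp s * ε₁)) * h
  have h2 : ξ T = ξ 0 + r₀ * ε₁ *
      ∫ s in (0:ℝ)..T,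
        Real.exp (-s) * r₀ * G (ξ s, Real.exp (-s) * r₀, Real.exp s * ε₁) := by
    have := hftc
    rw [intervalIntegral.integral_congr (g := fun s =>
      r₀ * ε₁ * (Real.exp (-s) * r₀ * G (ξ s, Real.exp (-s) * r₀, Real.exp s * ε₁)))
      (fun s _ => hkey s)] at this
    rw [intervalIntegral.integral_const_mul] at this
    linarith [this]
  have hM0 : 0 ≤ M := le_trans (abs_nonneg _) (hM 0 ⟨le_refl _, hT.le⟩)
  have h3 : |ξ T - ξ 0| ≤ M * r₀ ^ 2 * ε₁ * T := by
    rw [← hftc]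
    have := intervalIntegral.norm_integral_le_of_norm_le_const
      (C := M * r₀ ^ 2 * ε₁) (a := (0:ℝ)) (b := T)
      (f := fun s => (Real.exp (-s) * r₀) ^ 2 * (Real.exp s * ε₁) *
        G (ξ s, Real.exp (-s) * r₀, Real.exp s * ε₁)) ?_
    · calc |∫ s in (0:ℝ)..T, (Real.exp (-s) * r₀) ^ 2 * (Real.exp s * ε₁) *
            G (ξ s, Real.exp (-s) * r₀, Real.exp s * ε₁)|
          ≤ M * r₀ ^ 2 * ε₁ * |T - 0| := this
        _ = M * r₀ ^ 2 * ε₁ * T := by rw [sub_zero, abs_of_pos hT]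
    · intro s hs
      rw [Set.uIoc_of_le hT.le] at hs
      have hs0 : 0 < s := hs.1
      have hsT : s ≤ T := hs.2
      have hGb := hM s ⟨hs0.le, hsT⟩
      have he1 : Real.exp (-s) ≤ 1 := Real.exp_le_one_iff.mpr (by linarith)
      have he0 : 0 < Real.exp (-s) := Real.exp_pos _
      have he0' : 0 < Real.exp s := Real.exp_pos _
      rw [Real.norm_eq_abs, abs_mul]
      have habs : |(Real.exp (-s) * r₀) ^ 2 * (Real.exp s * ε₁)| =
          Real.exp (-s) * r₀ ^ 2 * ε₁ := by
        rw [abs_of_pos (by positivity)]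
        have h := hexp s
        linear_combination (Real.exp (-s) * r₀ ^ 2 * ε₁) * h
      rw [habs]
      calc Real.exp (-s) * r₀ ^ 2 * ε₁ *
            |G (ξ s, Real.exp (-s) * r₀, Real.exp s * ε₁)|
          ≤ 1 * r₀ ^ 2 * ε₁ * M := by
            apply mul_le_mul _ hGb (abs_nonneg _) (by positivity)
            nlinarith [mul_le_mul_of_nonneg_right he1 (show (0:ℝ) ≤ r₀ ^ 2 * ε₁ by positivity)]
        _ = M * r₀ ^ 2 * ε₁ := by ring
  exact ⟨h1, h2, h3⟩
end

section
/- Let I₋, I₊ : [a,b] → ℝ be continuous with I₋(y) < 0 and I₊(y) < 0 for all y, and suppose y* ∈ (a,b) is a simple zero of D(y) := I₋(y) − I₊(y) (i.e. D(y*) = 0, D is C¹ near y*, D'(y*) ≠ 0). For ε > 0 define Δ_ε(y) = exp((I₊(y) + o₊(ε,y))/ε²) − exp((I₋(y) + o₋(ε,y))/ε²), where o±(ε,·) → 0 uniformly on [a,b] as ε → 0 and o± are C¹ in y with derivatives also tending to 0 uniformly. Then for every sufficiently small ε > 0, Δ_ε has a zero y(ε) near y*, and y(ε) → y* as ε → 0.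 -/
open Set Filter

/-- A simple zero `y*` of `I₋ - I₊` (both negative) gives rise, for every small `ε > 0`,
to a zero of the exponential difference map
`Δ_ε(y) = exp((I₊(y)+o₊(ε,y))/ε²) - exp((I₋(y)+o₋(ε,y))/ε²)` near `y*`,
converging to `y*` as `ε → 0`. -/
theorem stmt_15 (a b ystar : ℝ) (hab : a < b) (hystar : ystar ∈ Set.Ioo a b)
    (Im Ip : ℝ → ℝ)
    (hIm : ContinuousOn Im (Set.Icc a b)) (hIp : ContinuousOn Ip (Set.Icc a b))
    (hImneg : ∀ y ∈ Set.Icc a b, Im y < 0) (hIpneg : ∀ y ∈ Set.Icc a b, Ip y < 0)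
    (hD0 : Im ystar - Ip ystar = 0)
    (hDC1 : ∃ U ∈ nhds ystar, ContDiffOn ℝ 1 (fun y => Im y - Ip y) U)
    (hD' : deriv (fun y => Im y - Ip y) ystar ≠ 0)
    (oP oM : ℝ → ℝ → ℝ)
    (hoPC1 : ∀ ε : ℝ, 0 < ε → ContDiffOn ℝ 1 (oP ε) (Set.Icc a b))
    (hoMC1 : ∀ ε : ℝ, 0 < ε → ContDiffOn ℝ 1 (oM ε) (Set.Icc a b))
    (hoP : TendstoUniformlyOn (fun ε y => oP ε y) 0 (nhdsWithin 0 (Set.Ioi (0:ℝ)))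
      (Set.Icc a b))
    (hoM : TendstoUniformlyOn (fun ε y => oM ε y) 0 (nhdsWithin 0 (Set.Ioi (0:ℝ)))
      (Set.Icc a b))
    (hoP' : TendstoUniformlyOn (fun ε y => derivWithin (oP ε) (Set.Icc a b) y) 0
      (nhdsWithin 0 (Set.Ioi (0:ℝ))) (Set.Icc a b))
    (hoM' : TendstoUniformlyOn (fun ε y => derivWithin (oM ε) (Set.Icc a b) y) 0
      (nhdsWithin 0 (Set.Ioi (0:ℝ))) (Set.Icc a b)) :
    ∀ η > 0, ∃ ε₀ > 0, ∀ ε : ℝ, 0 < ε → ε < ε₀ →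
      ∃ y ∈ Set.Icc a b, |y - ystar| < η ∧
        Real.exp ((Ip y + oP ε y) / ε ^ 2) - Real.exp ((Im y + oM ε y) / ε ^ 2) = 0 := by
  intro η hη
  set D : ℝ → ℝ := fun y => Im y - Ip y with hDdef
  set c := deriv D ystar with hc
  obtain ⟨U, hU, hC1⟩ := hDC1
  have hd : HasDerivAt D c ystar :=
    ((hC1.differentiableOn one_ne_zero).differentiableAt hU).hasDerivAt
  have htend := hasDerivAt_iff_tendsto_slope.mp hd
  have hcne : c ≠ 0 := hD'
  have hcpos : (0:ℝ) < |c| := abs_pos.mpr hcne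
  have hev : ∀ᶠ y in nhdsWithin ystar {ystar}ᶜ, dist (slope D ystar y) c < |c| :=
    Metric.tendsto_nhds.mp htend |c| hcpos
  rw [eventually_nhdsWithin_iff] at hev
  obtain ⟨r, hr, hball⟩ := Metric.eventually_nhds_iff.mp hev
  obtain ⟨ha', hb'⟩ := hystar
  set r' := min r (min η (min (ystar - a) (b - ystar))) with hr'def
  have hr'pos : 0 < r' :=
    lt_min hr (lt_min hη (lt_min (by linarith) (by linarith)))
  have hr'r : r' ≤ r := min_le_left _ _
  have hr'η : r' ≤ η := le_trans (min_le_right _ _) (min_le_left _ _)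
  have hr'a : r' ≤ ystar - a :=
    le_trans (min_le_right _ _) (le_trans (min_le_right _ _) (min_le_left _ _))
  have hr'b : r' ≤ b - ystar :=
    le_trans (min_le_right _ _) (le_trans (min_le_right _ _) (min_le_right _ _))
  set y₁ := ystar - r' / 2 with hy₁def
  set y₂ := ystar + r' / 2 with hy₂def
  have hy₁mem : y₁ ∈ Set.Icc a b := ⟨by simp only [hy₁def]; linarith, by simp only [hy₁def]; linarith⟩
  have hy₂mem : y₂ ∈ Set.Icc a b := ⟨by simp only [hy₂def]; linarith, by simp only [hy₂def]; linarith⟩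
  have hy₁ne : y₁ ≠ ystar := by simp only [hy₁def]; intro h; nlinarith [hr'pos]
  have hy₂ne : y₂ ≠ ystar := by simp only [hy₂def]; intro h; nlinarith [hr'pos]
  have hy₁dist : dist y₁ ystar < r := by
    rw [Real.dist_eq]
    have : |y₁ - ystar| = r' / 2 := by
      simp only [hy₁def]; rw [show ystar - r'/2 - ystar = -(r'/2) by ring, abs_neg,
        abs_of_pos (by linarith)]
    rw [this]; linarith
  have hy₂dist : dist y₂ ystar < r := by
    rw [Real.dist_eq]
    have : |y₂ - ystar| = r' / 2 := by
      simp only [hy₂def]; rw [show ystar + r'/2 - ystar = r'/2 by ring,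
        abs_of_pos (by linarith)]
    rw [this]; linarith
  have hs₁ := hball hy₁dist hy₁ne
  have hs₂ := hball hy₂dist hy₂ne
  rw [Real.dist_eq] at hs₁ hs₂
  have hD0' : D ystar = 0 := hD0
  have hslope₁ : D y₁ = slope D ystar y₁ * (y₁ - ystar) := by
    rw [slope_def_field]
    field_simp [sub_ne_zero.mpr hy₁ne]
    rw [hD0']; ring
  have hslope₂ : D y₂ = slope D ystar y₂ * (y₂ - ystar) := by
    rw [slope_def_field]
    field_simp [sub_ne_zero.mpr hy₂ne]
    rw [hD0']; ring
  have hy₁sub : y₁ - ystar = -(r' / 2) := by simp only [hy₁def]; ring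
  have hy₂sub : y₂ - ystar = r' / 2 := by simp only [hy₂def]; ring
  -- Determine signs
  have key : (D y₁ < 0 ∧ 0 < D y₂) ∨ (D y₂ < 0 ∧ 0 < D y₁) := by
    rcases lt_or_gt_of_ne hcne with hneg | hpos
    · -- c < 0 : slope < 0 near ystar
      have habs : |c| = -c := abs_of_neg hneg
      rw [habs] at hs₁ hs₂
      have hsl₁ : slope D ystar y₁ < 0 := by
        have := abs_sub_lt_iff.mp hs₁; linarith [this.2]
      have hsl₂ : slope D ystar y₂ < 0 := by
        have := abs_sub_lt_iff.mp hs₂; linarith [this.2]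
      right
      constructor
      · rw [hslope₂, hy₂sub]; exact mul_neg_of_neg_of_pos hsl₂ (by linarith)
      · rw [hslope₁, hy₁sub]; exact mul_pos_of_neg_of_neg hsl₁ (by linarith)
    · -- c > 0 : slope > 0 near ystar
      have habs : |c| = c := abs_of_pos hpos
      rw [habs] at hs₁ hs₂
      have hsl₁ : 0 < slope D ystar y₁ := by
        have := abs_sub_lt_iff.mp hs₁; linarith [this.1]
      have hsl₂ : 0 < slope D ystar y₂ := by
        have := abs_sub_lt_iff.mp hs₂; linarith [this.1]
      left
      constructor
      · rw [hslope₁, hy₁sub]; exact mul_neg_of_pos_of_neg hsl₁ (by linarith)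
      · rw [hslope₂, hy₂sub]; exact mul_pos hsl₂ (by linarith)
  have hDne₁ : D y₁ ≠ 0 := by rcases key with ⟨h1, _⟩ | ⟨_, h1⟩ <;> [exact ne_of_lt h1; exact ne_of_gt h1]
  have hDne₂ : D y₂ ≠ 0 := by rcases key with ⟨_, h2⟩ | ⟨h2, _⟩ <;> [exact ne_of_gt h2; exact ne_of_lt h2]
  set m := min |D y₁| |D y₂| with hmdef
  have hm : 0 < m := lt_min (abs_pos.mpr hDne₁) (abs_pos.mpr hDne₂)
  have hm₁ : m ≤ |D y₁| := min_le_left _ _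
  have hm₂ : m ≤ |D y₂| := min_le_right _ _
  -- uniform smallness of the perturbations
  have hP := Metric.tendstoUniformlyOn_iff.mp hoP (m / 2) (by positivity)
  have hM := Metric.tendstoUniformlyOn_iff.mp hoM (m / 2) (by positivity)
  have hPM := hP.and hM
  rw [eventually_nhdsWithin_iff] at hPM
  obtain ⟨δ, hδ, hδP⟩ := Metric.eventually_nhds_iff.mp hPM
  refine ⟨δ, hδ, fun ε hε hεδ => ?_⟩
  have hεd : dist ε 0 < δ := by rw [Real.dist_eq, sub_zero, abs_of_pos hε]; exact hεδ
  obtain ⟨hPb, hMb⟩ := hδP hεd hε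
  -- the perturbed function
  set g : ℝ → ℝ := fun y => D y - (oP ε y - oM ε y) with hgdef
  have hsub : Set.Icc y₁ y₂ ⊆ Set.Icc a b := Set.Icc_subset_Icc hy₁mem.1 hy₂mem.2
  have hgc : ContinuousOn g (Set.Icc y₁ y₂) :=
    (((hIm.sub hIp).sub (((hoPC1 ε hε).continuousOn).sub
      ((hoMC1 ε hε).continuousOn))).mono hsub)
  have hy₁₂ : y₁ ≤ y₂ := by simp only [hy₁def, hy₂def]; linarith
  have hpert : ∀ y ∈ Set.Icc a b, |oP ε y - oM ε y| < m := by
    intro y hy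
    have h1 := hPb y hy
    have h2 := hMb y hy
    rw [dist_comm, Real.dist_eq] at h1 h2
    simp only [Pi.zero_apply, sub_zero] at h1 h2
    calc |oP ε y - oM ε y| ≤ |oP ε y| + |oM ε y| := abs_sub _ _
      _ < m / 2 + m / 2 := by linarith
      _ = m := by ring
  have hp₁ := hpert y₁ hy₁mem
  have hp₂ := hpert y₂ hy₂mem
  have hab₁ := abs_lt.mp hp₁
  have hab₂ := abs_lt.mp hp₂
  -- find the zero via IVT
  have hzero : ∃ y ∈ Set.Icc y₁ y₂, g y = 0 := by
    rcases key with ⟨h1, h2⟩ | ⟨h2, h1⟩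
    · have hg₁ : g y₁ < 0 := by
        have : m ≤ -D y₁ := by rwa [abs_of_neg h1] at hm₁
        simp only [hgdef]; linarith [hab₁.1]
      have hg₂ : 0 < g y₂ := by
        have : m ≤ D y₂ := by rwa [abs_of_pos h2] at hm₂
        simp only [hgdef]; linarith [hab₂.2]
      have := intermediate_value_Icc hy₁₂ hgc
      obtain ⟨y, hy, hgy⟩ := this ⟨le_of_lt hg₁, le_of_lt hg₂⟩
      exact ⟨y, hy, hgy⟩
    · have hg₁ : 0 < g y₁ := by
        have : m ≤ D y₁ := by rwa [abs_of_pos h1] at hm₁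
        simp only [hgdef]; linarith [hab₁.2]
      have hg₂ : g y₂ < 0 := by
        have : m ≤ -D y₂ := by rwa [abs_of_neg h2] at hm₂
        simp only [hgdef]; linarith [hab₂.1]
      have := intermediate_value_Icc' hy₁₂ hgc
      obtain ⟨y, hy, hgy⟩ := this ⟨le_of_lt hg₂, le_of_lt hg₁⟩
      exact ⟨y, hy, hgy⟩
  obtain ⟨y, hyIcc, hgy⟩ := hzero
  refine ⟨y, hsub hyIcc, ?_, ?_⟩
  · have h1 : ystar - r' / 2 ≤ y := hyIcc.1
    have h2 : y ≤ ystar + r' / 2 := hyIcc.2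
    have : |y - ystar| ≤ r' / 2 := abs_le.mpr ⟨by linarith, by linarith⟩
    linarith
  · have heq : Ip y + oP ε y = Im y + oM ε y := by
      have : Im y - Ip y - (oP ε y - oM ε y) = 0 := hgy
      linarith
    rw [heq, sub_self]
end
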